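/- arXiv:2510.23804 — 2 statements merged into one kernel-verified Lean document; each statement's English description precedes it below -/
import Mathlib

section
/- Let x be a Gaussian random vector in ℝ² with mean m ∈ ℝ² and covariance σ²I₂ (σ > 0), and let w ∈ ℝ² be a unit vector. Then E[ x · 1{⟨w, x⟩ ≥ 0} ] = Φ(⟨w, m⟩/σ)·m + σ·φ(⟨w, m⟩/σ)·w, where φ and Φ are the standard Gaussian PDF and CDF. -/
open MeasureTheory ProbabilityTheory

open Real Set
open scoped NNReal ENNReal

/-- The standard Gaussian probability density function `φ`. -/
noncomputable def gaussPDF (t : ℝ) : ℝ := (Real.sqrt (2 * Real.pi))⁻¹ * Real.exp (-(t ^ 2) / 2)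

/-- The standard Gaussian cumulative distribution function `Φ`. -/
noncomputable def gaussCDF (t : ℝ) : ℝ := ∫ s in Set.Iic t, gaussPDF s

lemma continuous_gaussPDF : Continuous gaussPDF := by
  unfold gaussPDF; fun_prop

lemma gaussPDF_neg (t : ℝ) : gaussPDF (-t) = gaussPDF t := by simp [gaussPDF]

lemma sqrt_two_pi_pos : 0 < Real.sqrt (2 * Real.pi) :=
  Real.sqrt_pos.2 (by positivity)

lemma gaussPDF_eq (t : ℝ) : gaussPDF t = (Real.sqrt (2 * Real.pi))⁻¹ * Real.exp (-(1/2) * t ^ 2) := by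
  rw [gaussPDF]; ring_nf

lemma integrable_gaussPDF : Integrable gaussPDF := by
  simp only [funext gaussPDF_eq]
  exact (integrable_exp_neg_mul_sq (by norm_num : (0:ℝ) < 1/2)).const_mul _

lemma integral_gaussPDF : ∫ t, gaussPDF t = 1 := by
  simp only [funext gaussPDF_eq]
  rw [MeasureTheory.integral_const_mul, integral_gaussian]
  rw [← Real.sqrt_inv, ← Real.sqrt_mul (by positivity)]
  have : (2 * Real.pi)⁻¹ * (Real.pi / (1/2)) = 1 := by
    field_simp
  rw [this, Real.sqrt_one]

lemma integrable_id_mul_gaussPDF : Integrable (fun t => t * gaussPDF t) := by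
  have h := (integrable_mul_exp_neg_mul_sq (by norm_num : (0:ℝ) < 1/2)).const_mul
    (Real.sqrt (2 * Real.pi))⁻¹
  refine h.congr ?_
  filter_upwards with t
  rw [gaussPDF_eq]; ring

lemma integral_id_mul_gaussPDF : ∫ t, t * gaussPDF t = 0 := by
  have h : ∫ t, (fun t => t * gaussPDF t) (-t) = ∫ t, t * gaussPDF t := integral_neg_eq_self (μ := volume) (fun t => t * gaussPDF t)
  simp only [gaussPDF_neg, neg_mul, integral_neg] at h
  linarith

lemma hasDerivAt_neg_gaussPDF (t : ℝ) :
    HasDerivAt (fun s => -gaussPDF s) (t * gaussPDF t) t := by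
  have h : HasDerivAt (fun s : ℝ => -(s^2)/2) (-t) t := by
    have := ((hasDerivAt_pow 2 t).neg.div_const 2)
    simpa using this.congr_deriv (by ring)
  have h2 := (h.exp.const_mul (Real.sqrt (2 * Real.pi))⁻¹).neg
  refine h2.congr_deriv ?_
  rw [gaussPDF]; ring

lemma integral_Ioi_id_mul_gaussPDF (a : ℝ) :
    ∫ t in Set.Ioi (-a), t * gaussPDF t = gaussPDF a := by
  have := integral_Ioi_of_hasDerivAt_of_tendsto' (f := fun s => -gaussPDF s)
    (f' := fun t => t * gaussPDF t) (a := -a) (m := 0)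
    (fun x _ => hasDerivAt_neg_gaussPDF x)
    (integrable_id_mul_gaussPDF.integrableOn)
    ?_
  · rw [this]
    simp [gaussPDF_neg]
  · rw [show (0:ℝ) = -0 by ring]
    refine Filter.Tendsto.neg ?_
    have h1 : Filter.Tendsto (fun t : ℝ => -(t^2)/2) Filter.atTop Filter.atBot := by
      apply Filter.Tendsto.atBot_div_const (by norm_num)
      exact Filter.tendsto_neg_atTop_atBot.comp (Filter.tendsto_pow_atTop (by norm_num))
    have h2 : Filter.Tendsto (fun t : ℝ => Real.exp (-(t^2)/2)) Filter.atTop (nhds 0) :=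
      Real.tendsto_exp_atBot.comp h1
    have h3 := h2.const_mul (Real.sqrt (2 * Real.pi))⁻¹
    show Filter.Tendsto (fun t => gaussPDF t) _ _
    simpa only [gaussPDF, mul_zero] using h3

lemma integral_Ioi_gaussPDF (a : ℝ) : ∫ t in Set.Ioi (-a), gaussPDF t = gaussCDF a := by
  rw [gaussCDF, ← integral_comp_neg_Iic]
  simp [gaussPDF_neg]

noncomputable def rotL (w₁ w₂ : ℝ) : (ℝ × ℝ) →ₗ[ℝ] (ℝ × ℝ) where
  toFun := fun p => (w₁ * p.1 - w₂ * p.2, w₂ * p.1 + w₁ * p.2)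
  map_add' := by intro a b; simp [Prod.ext_iff]; constructor <;> ring
  map_smul' := by intro c a; simp [Prod.ext_iff, smul_eq_mul]; constructor <;> ring

noncomputable def rotC (w₁ w₂ : ℝ) : (ℝ × ℝ) →L[ℝ] (ℝ × ℝ) :=
  LinearMap.toContinuousLinearMap (rotL w₁ w₂)

lemma rotC_apply (w₁ w₂ : ℝ) (p : ℝ × ℝ) :
    rotC w₁ w₂ p = (w₁ * p.1 - w₂ * p.2, w₂ * p.1 + w₁ * p.2) := rfl

lemma rotC_det (w₁ w₂ : ℝ) : (rotC w₁ w₂).det = w₁ ^ 2 + w₂ ^ 2 := by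
  have : (rotC w₁ w₂ : (ℝ × ℝ) →ₗ[ℝ] (ℝ × ℝ)) = rotL w₁ w₂ := rfl
  rw [ContinuousLinearMap.det, this, ← LinearMap.det_toMatrix (Module.Basis.finTwoProd ℝ)]
  rw [Matrix.det_fin_two]
  simp [LinearMap.toMatrix_apply, Module.Basis.finTwoProd_zero, Module.Basis.finTwoProd_one,
    Module.Basis.coe_finTwoProd_repr, rotL]
  ring

lemma rot_bijective {w₁ w₂ : ℝ} (h : w₁ ^ 2 + w₂ ^ 2 ≠ 0) :
    Function.Bijective (fun p : ℝ × ℝ => (w₁ * p.1 - w₂ * p.2, w₂ * p.1 + w₁ * p.2)) := by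
  constructor
  · intro a b hab
    simp only [Prod.ext_iff] at hab ⊢
    obtain ⟨h1, h2⟩ := hab
    have hu : (w₁ ^ 2 + w₂ ^ 2) * (a.1 - b.1) = 0 := by linear_combination w₁ * h1 + w₂ * h2
    have hv : (w₁ ^ 2 + w₂ ^ 2) * (a.2 - b.2) = 0 := by linear_combination (-w₂) * h1 + w₁ * h2
    constructor
    · have := (mul_eq_zero.1 hu).resolve_left h; linarith
    · have := (mul_eq_zero.1 hv).resolve_left h; linarith
  · intro y
    refine ⟨((w₁ * y.1 + w₂ * y.2) / (w₁^2 + w₂^2), (-w₂ * y.1 + w₁ * y.2) / (w₁^2 + w₂^2)), ?_⟩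
    simp only [Prod.ext_iff]
    constructor <;> (field_simp; ring)

/-- Change of variables by a rotation-like map composed with translation. -/
lemma integral_comp_rot_add {w₁ w₂ : ℝ} (h : w₁ ^ 2 + w₂ ^ 2 ≠ 0) (m : ℝ × ℝ) (g : ℝ × ℝ → ℝ) :
    ∫ z : ℝ × ℝ, g z
      = ∫ z : ℝ × ℝ, (w₁ ^ 2 + w₂ ^ 2) * g (m.1 + (w₁ * z.1 - w₂ * z.2), m.2 + (w₂ * z.1 + w₁ * z.2)) := by
  have hf' : ∀ x ∈ (univ : Set (ℝ × ℝ)),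
      HasFDerivWithinAt (fun z : ℝ × ℝ => m + rotC w₁ w₂ z) (rotC w₁ w₂) univ x := by
    intro x _
    exact (((rotC w₁ w₂).hasFDerivAt).const_add m).hasFDerivWithinAt
  have hinj : InjOn (fun z : ℝ × ℝ => m + rotC w₁ w₂ z) univ := by
    intro a _ b _ hab
    simp only [add_right_injective] at hab
    have h2 : rotC w₁ w₂ a = rotC w₁ w₂ b := by
      have := congrArg (fun t => t - m) hab; simpa using this
    exact (rot_bijective h).1 h2
  have hsurj : (fun z : ℝ × ℝ => m + rotC w₁ w₂ z) '' univ = univ := by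
    apply image_univ_of_surjective
    intro y
    obtain ⟨x, hx⟩ := (rot_bijective h).2 (y - m)
    have hx' : rotC w₁ w₂ x = y - m := hx
    refine ⟨x, ?_⟩
    show m + rotC w₁ w₂ x = y
    rw [hx']; abel
  have := integral_image_eq_integral_abs_det_fderiv_smul (volume : Measure (ℝ × ℝ))
    (MeasurableSet.univ) hf' hinj g
  rw [hsurj] at this
  simp only [setIntegral_univ] at this
  rw [this]
  congr 1
  funext z
  rw [rotC_det, rotC_apply, abs_of_nonneg (by positivity : (0:ℝ) ≤ w₁ ^ 2 + w₂ ^ 2), smul_eq_mul]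
  rfl

lemma integrable_indicator_prod_mul {f g : ℝ → ℝ} (hf : Integrable f) (hg : Integrable g)
    (a : ℝ) :
    Integrable (fun z : ℝ × ℝ => (Set.indicator (Ici (-a)) f z.1) * g z.2) := by
  rw [MeasureTheory.Measure.volume_eq_prod ℝ ℝ]
  exact (hf.indicator measurableSet_Ici).mul_prod hg

lemma key' (a c₀ d₁ d₂ : ℝ) :
    ∫ z : ℝ × ℝ, Set.indicator {p : ℝ × ℝ | -a ≤ p.1}
      (fun p => (c₀ + d₁ * p.1 + d₂ * p.2) * (gaussPDF p.1 * gaussPDF p.2)) z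
    = c₀ * gaussCDF a + d₁ * gaussPDF a := by
  have hpt : (fun z : ℝ × ℝ => Set.indicator {p : ℝ × ℝ | -a ≤ p.1}
        (fun p => (c₀ + d₁ * p.1 + d₂ * p.2) * (gaussPDF p.1 * gaussPDF p.2)) z)
      = fun z : ℝ × ℝ =>
        ((Set.indicator (Ici (-a)) (fun s => (c₀ + d₁ * s) * gaussPDF s) z.1) * gaussPDF z.2)
        + ((Set.indicator (Ici (-a)) gaussPDF z.1) * (d₂ * (z.2 * gaussPDF z.2))) := by
    funext z
    by_cases hz : -a ≤ z.1
    · rw [Set.indicator_of_mem (by exact hz), Set.indicator_of_mem (by exact hz),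
        Set.indicator_of_mem (by exact hz)]
      ring
    · rw [Set.indicator_of_notMem (by exact hz), Set.indicator_of_notMem (by exact hz),
        Set.indicator_of_notMem (by exact hz)]
      simp
  rw [hpt]
  have hint1 : Integrable (fun z : ℝ × ℝ =>
      (Set.indicator (Ici (-a)) (fun s => (c₀ + d₁ * s) * gaussPDF s) z.1) * gaussPDF z.2) := by
    refine integrable_indicator_prod_mul ?_ integrable_gaussPDF a
    have : (fun s => (c₀ + d₁ * s) * gaussPDF s)
        = fun s => c₀ * gaussPDF s + d₁ * (s * gaussPDF s) := by funext s; ring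
    rw [this]
    exact (integrable_gaussPDF.const_mul c₀).add (integrable_id_mul_gaussPDF.const_mul d₁)
  have hint2 : Integrable (fun z : ℝ × ℝ =>
      (Set.indicator (Ici (-a)) gaussPDF z.1) * (d₂ * (z.2 * gaussPDF z.2))) :=
    integrable_indicator_prod_mul integrable_gaussPDF
      ((integrable_id_mul_gaussPDF.const_mul d₂)) a
  rw [integral_add hint1 hint2]
  rw [MeasureTheory.Measure.volume_eq_prod ℝ ℝ,
    integral_prod_mul (f := Set.indicator (Ici (-a)) (fun s => (c₀ + d₁ * s) * gaussPDF s))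
      (g := gaussPDF),
    integral_prod_mul (f := Set.indicator (Ici (-a)) gaussPDF)
      (g := fun t => d₂ * (t * gaussPDF t))]
  rw [integral_indicator measurableSet_Ici, integral_indicator measurableSet_Ici]
  have e1 : ∫ s in Ici (-a), (c₀ + d₁ * s) * gaussPDF s
      = c₀ * gaussCDF a + d₁ * gaussPDF a := by
    rw [integral_Ici_eq_integral_Ioi]
    have : (fun s => (c₀ + d₁ * s) * gaussPDF s)
        = fun s => c₀ * gaussPDF s + d₁ * (s * gaussPDF s) := by funext s; ring
    rw [this, integral_add ((integrable_gaussPDF.const_mul c₀).integrableOn)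
      ((integrable_id_mul_gaussPDF.const_mul d₁).integrableOn),
      MeasureTheory.integral_const_mul, MeasureTheory.integral_const_mul, integral_Ioi_gaussPDF, integral_Ioi_id_mul_gaussPDF]
  have e2 : ∫ t : ℝ, d₂ * (t * gaussPDF t) = 0 := by
    rw [MeasureTheory.integral_const_mul, integral_id_mul_gaussPDF, mul_zero]
  rw [e1, e2, integral_gaussPDF, mul_one, mul_zero, add_zero]

lemma key (a w₁ w₂ c₀ c₁ c₂ : ℝ) (hw : w₁ ^ 2 + w₂ ^ 2 = 1) :
    ∫ z : ℝ × ℝ, Set.indicator {p : ℝ × ℝ | -a ≤ w₁ * p.1 + w₂ * p.2}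
      (fun p => (c₀ + c₁ * p.1 + c₂ * p.2) * (gaussPDF p.1 * gaussPDF p.2)) z
    = c₀ * gaussCDF a + (c₁ * w₁ + c₂ * w₂) * gaussPDF a := by
  have h0 : w₁ ^ 2 + w₂ ^ 2 ≠ 0 := by rw [hw]; norm_num
  rw [integral_comp_rot_add h0 (0, 0)
    (g := fun z => Set.indicator {p : ℝ × ℝ | -a ≤ w₁ * p.1 + w₂ * p.2}
      (fun p => (c₀ + c₁ * p.1 + c₂ * p.2) * (gaussPDF p.1 * gaussPDF p.2)) z)]
  rw [hw]
  simp only [one_mul, zero_add]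
  have hpt : (fun z : ℝ × ℝ => Set.indicator {p : ℝ × ℝ | -a ≤ w₁ * p.1 + w₂ * p.2}
        (fun p => (c₀ + c₁ * p.1 + c₂ * p.2) * (gaussPDF p.1 * gaussPDF p.2))
        ((w₁ * z.1 - w₂ * z.2, w₂ * z.1 + w₁ * z.2)))
      = fun z : ℝ × ℝ => Set.indicator {p : ℝ × ℝ | -a ≤ p.1}
        (fun p => (c₀ + (c₁ * w₁ + c₂ * w₂) * p.1 + (c₂ * w₁ - c₁ * w₂) * p.2)
          * (gaussPDF p.1 * gaussPDF p.2)) z := by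
    funext z
    have hmem : ((w₁ * z.1 - w₂ * z.2, w₂ * z.1 + w₁ * z.2) : ℝ × ℝ)
        ∈ {p : ℝ × ℝ | -a ≤ w₁ * p.1 + w₂ * p.2} ↔ -a ≤ z.1 := by
      have hlin : w₁ * (w₁ * z.1 - w₂ * z.2) + w₂ * (w₂ * z.1 + w₁ * z.2) = z.1 := by
        linear_combination z.1 * hw
      simp only [Set.mem_setOf_eq, hlin]
    have hval : gaussPDF (w₁ * z.1 - w₂ * z.2) * gaussPDF (w₂ * z.1 + w₁ * z.2)
        = gaussPDF z.1 * gaussPDF z.2 := by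
      have hmul : ∀ x y : ℝ, (Real.sqrt (2 * Real.pi))⁻¹ * Real.exp x
          * ((Real.sqrt (2 * Real.pi))⁻¹ * Real.exp y)
          = ((Real.sqrt (2 * Real.pi))⁻¹) ^ 2 * Real.exp (x + y) := by
        intro x y; rw [Real.exp_add]; ring
      simp only [gaussPDF]
      rw [hmul, hmul]
      congr 1
      linear_combination Real.exp (-(z.1 ^ 2) / 2 + -(z.2 ^ 2) / 2) * 0 + (0:ℝ)
        + (by
          have harg : -((w₁ * z.1 - w₂ * z.2) ^ 2) / 2 + -((w₂ * z.1 + w₁ * z.2) ^ 2) / 2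
              = -(z.1 ^ 2) / 2 + -(z.2 ^ 2) / 2 := by
            linear_combination (-(z.1 ^ 2 + z.2 ^ 2) / 2) * hw
          exact congrArg Real.exp harg : Real.exp _ = Real.exp _)
    by_cases hz : -a ≤ z.1
    · rw [Set.indicator_of_mem (hmem.2 hz), Set.indicator_of_mem (by exact hz), hval]
      ring_nf
    · rw [Set.indicator_of_notMem (fun hc => hz (hmem.1 hc)),
        Set.indicator_of_notMem (by exact hz)]
  rw [hpt, key']

/-- A Gaussian vector in `ℝ²` with mean `m` and covariance `σ²·I₂`: independent coordinates
`xᵢ ~ N(mᵢ, σ²)`. -/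
noncomputable def gauss2 (m : ℝ × ℝ) (σ : ℝ) : Measure (ℝ × ℝ) :=
  (gaussianReal m.1 (Real.toNNReal (σ ^ 2))).prod (gaussianReal m.2 (Real.toNNReal (σ ^ 2)))


lemma gauss2_eq_withDensity (m : ℝ × ℝ) {σ : ℝ} (hσ : 0 < σ) :
    gauss2 m σ = (volume : Measure (ℝ × ℝ)).withDensity
      (fun z => ENNReal.ofReal (gaussianPDFReal m.1 (Real.toNNReal (σ ^ 2)) z.1
        * gaussianPDFReal m.2 (Real.toNNReal (σ ^ 2)) z.2)) := by
  set v : ℝ≥0 := Real.toNNReal (σ ^ 2) with hv_def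
  have hv : v ≠ 0 := by
    simp only [hv_def, ne_eq, Real.toNNReal_eq_zero, not_le]
    positivity
  rw [gauss2]
  refine Measure.prod_eq fun s t hs ht => ?_
  rw [withDensity_apply _ (hs.prod ht), MeasureTheory.Measure.volume_eq_prod ℝ ℝ,
    ← Measure.prod_restrict]
  have hD : (fun z : ℝ × ℝ => ENNReal.ofReal (gaussianPDFReal m.1 v z.1
      * gaussianPDFReal m.2 v z.2))
      = fun z : ℝ × ℝ => gaussianPDF m.1 v z.1 * gaussianPDF m.2 v z.2 := by
    funext z
    rw [gaussianPDF, gaussianPDF, ENNReal.ofReal_mul (gaussianPDFReal_nonneg _ _ _)]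
  rw [hD, lintegral_prod_mul (measurable_gaussianPDF m.1 v).aemeasurable
    (measurable_gaussianPDF m.2 v).aemeasurable]
  rw [gaussianReal_apply _ hv s, gaussianReal_apply _ hv t]

lemma gaussianPDFReal_affine {σ : ℝ} (hσ : 0 < σ) (μ u : ℝ) :
    gaussianPDFReal μ (Real.toNNReal (σ ^ 2)) (μ + σ * u) = σ⁻¹ * gaussPDF u := by
  rw [gaussianPDFReal]
  have hcoe : ((Real.toNNReal (σ ^ 2) : ℝ≥0) : ℝ) = σ ^ 2 :=
    Real.coe_toNNReal _ (by positivity)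
  rw [hcoe]
  have h1 : Real.sqrt (2 * π * σ ^ 2) = Real.sqrt (2 * π) * σ := by
    rw [Real.sqrt_mul (by positivity), Real.sqrt_sq hσ.le]
  have h2 : -(μ + σ * u - μ) ^ 2 / (2 * σ ^ 2) = -(u ^ 2) / 2 := by
    field_simp; ring
  rw [h1, h2, gaussPDF, mul_inv]
  ring

theorem main_aux (σ : ℝ) (hσ : 0 < σ) (m w : ℝ × ℝ) (hw : w.1 ^ 2 + w.2 ^ 2 = 1) (c₁ c₂ : ℝ) :
    (∫ x in {x : ℝ × ℝ | 0 ≤ w.1 * x.1 + w.2 * x.2}, (c₁ * x.1 + c₂ * x.2) ∂(gauss2 m σ))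
      = gaussCDF ((w.1 * m.1 + w.2 * m.2) / σ) * (c₁ * m.1 + c₂ * m.2)
        + σ * gaussPDF ((w.1 * m.1 + w.2 * m.2) / σ) * (c₁ * w.1 + c₂ * w.2) := by
  set v : ℝ≥0 := Real.toNNReal (σ ^ 2) with hv_def
  set a : ℝ := (w.1 * m.1 + w.2 * m.2) / σ with ha_def
  set S : Set (ℝ × ℝ) := {x : ℝ × ℝ | 0 ≤ w.1 * x.1 + w.2 * x.2} with hS_def
  have hS : MeasurableSet S :=
    measurableSet_le measurable_const ((measurable_fst.const_mul w.1).add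
      (measurable_snd.const_mul w.2))
  set ρ : ℝ × ℝ → ℝ := fun z => gaussianPDFReal m.1 v z.1 * gaussianPDFReal m.2 v z.2
    with hρ_def
  have hρ_nonneg : ∀ z, 0 ≤ ρ z := fun z =>
    mul_nonneg (gaussianPDFReal_nonneg _ _ _) (gaussianPDFReal_nonneg _ _ _)
  have hρ_meas : Measurable fun z => (ρ z).toNNReal :=
    (((measurable_gaussianPDFReal _ _).comp measurable_fst).mul
      ((measurable_gaussianPDFReal _ _).comp measurable_snd)).real_toNNReal
  rw [gauss2_eq_withDensity m hσ]
  have hofReal : (fun z : ℝ × ℝ => ENNReal.ofReal (gaussianPDFReal m.1 v z.1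
      * gaussianPDFReal m.2 v z.2)) = fun z => ((ρ z).toNNReal : ℝ≥0∞) := rfl
  rw [hofReal, restrict_withDensity hS,
    integral_withDensity_eq_integral_smul hρ_meas (fun x => c₁ * x.1 + c₂ * x.2)]
  have hsmul : (fun z : ℝ × ℝ => (ρ z).toNNReal • (c₁ * z.1 + c₂ * z.2))
      = fun z => ρ z * (c₁ * z.1 + c₂ * z.2) := by
    funext z
    rw [NNReal.smul_def, Real.coe_toNNReal _ (hρ_nonneg z), smul_eq_mul]
  rw [hsmul, ← integral_indicator hS]
  rw [integral_comp_rot_add (w₁ := σ) (w₂ := 0) (by simpa using (pow_pos hσ 2).ne') m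
    (g := fun z => Set.indicator S (fun p => ρ p * (c₁ * p.1 + c₂ * p.2)) z)]
  have hpt : (fun z : ℝ × ℝ => (σ ^ 2 + 0 ^ 2) *
        Set.indicator S (fun p => ρ p * (c₁ * p.1 + c₂ * p.2))
          (m.1 + (σ * z.1 - 0 * z.2), m.2 + (0 * z.1 + σ * z.2)))
      = fun z : ℝ × ℝ => Set.indicator {p : ℝ × ℝ | -a ≤ w.1 * p.1 + w.2 * p.2}
        (fun p => ((c₁ * m.1 + c₂ * m.2) + (c₁ * σ) * p.1 + (c₂ * σ) * p.2)
          * (gaussPDF p.1 * gaussPDF p.2)) z := by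
    funext z
    have hmem : ((m.1 + (σ * z.1 - 0 * z.2), m.2 + (0 * z.1 + σ * z.2)) : ℝ × ℝ) ∈ S
        ↔ -a ≤ w.1 * z.1 + w.2 * z.2 := by
      simp only [hS_def, Set.mem_setOf_eq, ha_def]
      have e0 : w.1 * (m.1 + (σ * z.1 - 0 * z.2)) + w.2 * (m.2 + (0 * z.1 + σ * z.2))
          = (w.1 * m.1 + w.2 * m.2) + σ * (w.1 * z.1 + w.2 * z.2) := by ring
      rw [e0, ← neg_div, div_le_iff₀ hσ]
      constructor <;> intro hh <;> nlinarith [hh]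
    by_cases hz : -a ≤ w.1 * z.1 + w.2 * z.2
    · rw [Set.indicator_of_mem (hmem.2 hz), Set.indicator_of_mem (by exact hz)]
      simp only [hρ_def]
      have e1 : m.1 + (σ * z.1 - 0 * z.2) = m.1 + σ * z.1 := by ring
      have e2 : m.2 + (0 * z.1 + σ * z.2) = m.2 + σ * z.2 := by ring
      rw [e1, e2, gaussianPDFReal_affine hσ, gaussianPDFReal_affine hσ]
      have hσ' : σ ≠ 0 := hσ.ne'
      field_simp
      ring
    · rw [Set.indicator_of_notMem (fun hc => hz (hmem.1 hc)),
        Set.indicator_of_notMem (by exact hz)]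
      simp
  rw [hpt, key a w.1 w.2 _ _ _ hw]
  ring

/-- For a Gaussian `x ~ N(m, σ²I₂)` and a unit vector `w ∈ ℝ²`,
`E[x · 1{⟨w,x⟩ ≥ 0}] = Φ(⟨w,m⟩/σ)·m + σ·φ(⟨w,m⟩/σ)·w` (stated componentwise). -/
theorem stmt_5 (σ : ℝ) (hσ : 0 < σ) (m w : ℝ × ℝ) (hw : w.1 ^ 2 + w.2 ^ 2 = 1) :
    (∫ x in {x : ℝ × ℝ | 0 ≤ w.1 * x.1 + w.2 * x.2}, x.1 ∂(gauss2 m σ))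
        = gaussCDF ((w.1 * m.1 + w.2 * m.2) / σ) * m.1
          + σ * gaussPDF ((w.1 * m.1 + w.2 * m.2) / σ) * w.1
    ∧ (∫ x in {x : ℝ × ℝ | 0 ≤ w.1 * x.1 + w.2 * x.2}, x.2 ∂(gauss2 m σ))
        = gaussCDF ((w.1 * m.1 + w.2 * m.2) / σ) * m.2
          + σ * gaussPDF ((w.1 * m.1 + w.2 * m.2) / σ) * w.2 := by
  constructor
  · simpa using main_aux σ hσ m w hw 1 0
  · simpa using main_aux σ hσ m w hw 0 1
end

section
/- Let f be a feed-forward network as in Definition 4.1 with input dimension d, D a feature-label distribution on ℝᵈ×ℝ, and ℓ a loss with finite differentiable population loss. Fix U ∈ O(d), let Q^(U) ∈ O(p) be the induced parameter rotation, V₀ ∈ O(p) arbitrary, and define the reparameterized networks f_U(θ;x) := f((Q^(U))ᵀV₀θ; x) and f_I(θ;x) := f(V₀θ; x). Let A be any deterministic first-order algorithm, i.e. θ_{t+1} = update({θ_τ}_{τ≤t}, {g_τ}_{τ≤t}) for a fixed function update, where g_τ is the gradient of the objective at θ_τ. Let θ_t^(U) denote the iterates of A on the objective θ ↦ L^(U)(θ;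 f_U) and θ_t^(I) the iterates of A on θ ↦ L(θ; f_I), both initialized at the same θ₀. Then for every t ≥ 0: (i) θ_t^(U) = θ_t^(I); and (ii) for every x ∈ ℝᵈ, f_U(θ_t^(U); x) = f_I(θ_t^(I); Uᵀx), so the learned forward maps (and hence decision boundaries) are equivariant under the data rotation. -/
open MeasureTheory Matrix

/-- Index set for the parameter vector `θ ∈ ℝᵖ` of a feed-forward network (Definition 4.1)
with input dimension `d` and `L+1` hidden layers of widths `m 1, …, m (L+1)` (scalar output).
The five summands index, respectively: the entries of the first-layer weight matrix
`W₁ ∈ ℝ^{m₁×d}`; the entries of the deeper hidden-layer weight matrices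
`W_{j+2} ∈ ℝ^{m_{j+2}×m_{j+1}}` for `j < L`; the entries of the hidden-layer bias vectors;
the entries of the output-layer weight (row) vector; and the output bias. -/
abbrev PIdx (d L : ℕ) (m : ℕ → ℕ) : Type :=
  (Fin (m 1) × Fin d) ⊕
  ((j : Fin L) × (Fin (m (j.1 + 2)) × Fin (m (j.1 + 1)))) ⊕
  ((j : Fin (L + 1)) × Fin (m (j.1 + 1))) ⊕
  Fin (m (L + 1)) ⊕ Unit

/-- The parameter space `ℝᵖ` of the network, presented with coordinates `PIdx d L m`. -/
abbrev PSpace (d L : ℕ) (m : ℕ → ℕ) : Type := PIdx d L m → ℝ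

/-- Hidden-layer outputs of the network (Definition 4.1): `hLayer … j` is the output of
hidden layer `j+1`, i.e. `h₁ = x` and `h_{j+1} = σ_{j+1}(W_j h_j + b_j)` entrywise. -/
noncomputable def hLayer (d L : ℕ) (m : ℕ → ℕ) (act : ℕ → ℝ → ℝ) (θ : PSpace d L m)
    (x : Fin d → ℝ) : (j : ℕ) → Fin (m (j + 1)) → ℝ
  | 0 => fun i =>
      act 1 ((∑ c, θ (Sum.inl (i, c)) * x c)
        + θ (Sum.inr (Sum.inr (Sum.inl ⟨⟨0, Nat.succ_pos L⟩, i⟩))))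
  | j + 1 => fun i =>
      if hj : j < L then
        act (j + 2)
          ((∑ c, θ (Sum.inr (Sum.inl ⟨⟨j, hj⟩, (i, c)⟩)) * hLayer d L m act θ x j c)
            + θ (Sum.inr (Sum.inr (Sum.inl ⟨⟨j + 1, by omega⟩, i⟩))))
      else 0

/-- The (scalar-valued) feed-forward network of Definition 4.1:
`f(θ; x) = W_{L+1} h_L(θ;x) + b_{L+1}`. -/
noncomputable def ffnet (d L : ℕ) (m : ℕ → ℕ) (act : ℕ → ℝ → ℝ) (θ : PSpace d L m)
    (x : Fin d → ℝ) : ℝ :=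
  (∑ i, θ (Sum.inr (Sum.inr (Sum.inr (Sum.inl i)))) * hLayer d L m act θ x L i)
    + θ (Sum.inr (Sum.inr (Sum.inr (Sum.inr ()))))

/-- The parameter rotation `Q^(U)` induced by a data-space matrix `U`: it acts on the
`vec(W₁)` coordinates by the block `Uᵀ ⊗ I_{m₁}` (i.e. `W₁ ↦ W₁U`) and is the identity on
all remaining coordinates. -/
noncomputable def rotQ (d L : ℕ) (m : ℕ → ℕ) (U : Matrix (Fin d) (Fin d) ℝ)
    (θ : PSpace d L m) : PSpace d L m :=
  fun idx =>
    match idx with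
    | Sum.inl (i, c) => ∑ c', θ (Sum.inl (i, c')) * U c' c
    | idx => θ idx

/-- The gradient `∇g(θ)` of a function on parameter space, as a vector of partial
derivatives. -/
noncomputable def gradVec (d L : ℕ) (m : ℕ → ℕ) (g : PSpace d L m → ℝ)
    (θ : PSpace d L m) : PSpace d L m :=
  fun i => fderiv ℝ g θ (Pi.single i 1)

/-- The rotated feature-label distribution `D^(U)`: the law of `(Ux, y)` for `(x,y) ~ D`. -/
noncomputable def rotMeas (d : ℕ) (U : Matrix (Fin d) (Fin d) ℝ)
    (D : Measure ((Fin d → ℝ) × ℝ)) : Measure ((Fin d → ℝ) × ℝ) :=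
  D.map (fun q => (U.mulVec q.1, q.2))

/-- The population loss `L(θ; g) = E_{(x,y)~D}[ℓ(y, g(θ;x))]`. -/
noncomputable def popLoss {d : ℕ} {P : Type*} (D : Measure ((Fin d → ℝ) × ℝ))
    (ℓ : ℝ → ℝ → ℝ) (g : P → (Fin d → ℝ) → ℝ) (θ : P) : ℝ :=
  ∫ q, ℓ q.2 (g θ q.1) ∂D


lemma hLayer_rotQ (d L : ℕ) (m : ℕ → ℕ) (act : ℕ → ℝ → ℝ)
    (M : Matrix (Fin d) (Fin d) ℝ) (θ : PSpace d L m) (x : Fin d → ℝ) :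
    ∀ j, hLayer d L m act (rotQ d L m M θ) x j = hLayer d L m act θ (M.mulVec x) j := by
  intro j
  induction j with
  | zero =>
    funext i
    simp only [hLayer, rotQ, Matrix.mulVec, dotProduct, Finset.sum_mul, Finset.mul_sum]
    rw [Finset.sum_comm]
    simp [mul_assoc]
  | succ j ih =>
    funext i
    simp only [hLayer, rotQ, ih]

lemma ffnet_rotQ (d L : ℕ) (m : ℕ → ℕ) (act : ℕ → ℝ → ℝ)
    (M : Matrix (Fin d) (Fin d) ℝ) (θ : PSpace d L m) (x : Fin d → ℝ) :
    ffnet d L m act (rotQ d L m M θ) x = ffnet d L m act θ (M.mulVec x) := by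
  simp only [ffnet, rotQ, hLayer_rotQ]

/-- Let `U ∈ O(d)`, `Q^(U)` the induced parameter rotation, `V₀ ∈ O(p)`
arbitrary, and reparameterized networks `f_U(θ;x) := f((Q^(U))ᵀV₀θ; x)` and
`f_I(θ;x) := f(V₀θ; x)`.  Let `A` be any deterministic first-order algorithm, i.e.
`θ_{t+1} = update(t, {θ_τ}_{τ≤t}, {∇L̃(θ_τ)}_{τ≤t})` for a fixed function `update`.  If
`θ^(U)` are the iterates of `A` on `θ ↦ L^(U)(θ; f_U)` and `θ^(I)` the iterates of `A` on
`θ ↦ L(θ; f_I)`, both initialized at the same `θ₀`, then for every `t`: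
(i) `θ^(U)_t = θ^(I)_t`, and (ii) `f_U(θ^(U)_t; x) = f_I(θ^(I)_t; Uᵀx)` for every `x`. -/
theorem stmt_13 (d L : ℕ) (m : ℕ → ℕ) (act : ℕ → ℝ → ℝ)
    (D : Measure ((Fin d → ℝ) × ℝ)) (ℓ : ℝ → ℝ → ℝ)
    (U : Matrix (Fin d) (Fin d) ℝ) (hU : Uᵀ * U = 1) (hU' : U * Uᵀ = 1)
    (V₀ : Matrix (PIdx d L m) (PIdx d L m) ℝ) (hV₀ : V₀ᵀ * V₀ = 1)
    -- the population loss is well defined (finite) and the integrands are measurable: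
    (hmeas : ∀ θ : PSpace d L m,
      Measurable (fun q : (Fin d → ℝ) × ℝ => ℓ q.2 (ffnet d L m act θ q.1)))
    (hint : ∀ θ : PSpace d L m,
      Integrable (fun q : (Fin d → ℝ) × ℝ => ℓ q.2 (ffnet d L m act θ q.1)) D)
    -- a deterministic first-order algorithm:
    (update : (t : ℕ) → (Fin (t + 1) → PSpace d L m) → (Fin (t + 1) → PSpace d L m) →
      PSpace d L m)
    (θ₀ : PSpace d L m) (θU θI : ℕ → PSpace d L m)
    (hU0 : θU 0 = θ₀) (hI0 : θI 0 = θ₀)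
    (hrecU : ∀ t, θU (t + 1) = update t (fun τ : Fin (t + 1) => θU τ.1)
      (fun τ : Fin (t + 1) => gradVec d L m
        (popLoss (rotMeas d U D) ℓ
          (fun θ x => ffnet d L m act (rotQ d L m Uᵀ (V₀.mulVec θ)) x)) (θU τ.1)))
    (hrecI : ∀ t, θI (t + 1) = update t (fun τ : Fin (t + 1) => θI τ.1)
      (fun τ : Fin (t + 1) => gradVec d L m
        (popLoss D ℓ (fun θ x => ffnet d L m act (V₀.mulVec θ) x)) (θI τ.1))) :
    ∀ t : ℕ, θU t = θI t
      ∧ ∀ x : Fin d → ℝ,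
          ffnet d L m act (rotQ d L m Uᵀ (V₀.mulVec (θU t))) x
            = ffnet d L m act (V₀.mulVec (θI t)) (Uᵀ.mulVec x)  := by
  have hφ : Measurable (fun q : (Fin d → ℝ) × ℝ => (U.mulVec q.1, q.2)) := by
    refine Measurable.prod ?_ measurable_snd
    exact ((Matrix.mulVecLin U).continuous_of_finiteDimensional).measurable.comp
      measurable_fst
  have hUU : ∀ x : Fin d → ℝ, Uᵀ.mulVec (U.mulVec x) = x := by
    intro x
    rw [Matrix.mulVec_mulVec, hU, Matrix.one_mulVec]
  have key : popLoss (rotMeas d U D) ℓ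
        (fun θ x => ffnet d L m act (rotQ d L m Uᵀ (V₀.mulVec θ)) x)
      = popLoss D ℓ (fun θ x => ffnet d L m act (V₀.mulVec θ) x) := by
    funext θ
    have h1 : popLoss (rotMeas d U D) ℓ
        (fun θ x => ffnet d L m act (rotQ d L m Uᵀ (V₀.mulVec θ)) x) θ
        = ∫ q : (Fin d → ℝ) × ℝ,
            ℓ q.2 (ffnet d L m act (rotQ d L m Uᵀ (V₀.mulVec θ)) (U.mulVec q.1)) ∂D := by
      simp only [popLoss, rotMeas]
      rw [MeasureTheory.integral_map hφ.aemeasurable]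
      exact ((hmeas _).aestronglyMeasurable)
    rw [h1]
    simp only [ffnet_rotQ, hUU]
    rfl
  have hall : ∀ t, θU t = θI t := by
    intro t
    induction t using Nat.strong_induction_on with
    | _ t ih =>
      match t with
      | 0 => rw [hU0, hI0]
      | t + 1 =>
        have hθ : (fun τ : Fin (t + 1) => θU τ.1) = (fun τ : Fin (t + 1) => θI τ.1) :=
          funext fun τ => ih τ.1 τ.2
        rw [hrecU, hrecI, key, hθ]
        exact congrArg _ (funext fun τ => congrArg _ (ih τ.1 τ.2))
  intro t
  refine ⟨hall t, fun x => ?_⟩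
  rw [ffnet_rotQ, hall t]
end
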